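/- arXiv:2509.00502 — 3 statements merged into one kernel-verified Lean document; each statement's English description precedes it below -/
import Mathlib

section
/- Let s, x ∈ ℂ with s² = 5, x a root of unity of order dividing 2D for some positive integer D, and set a = (s + 1)·x. Then s ∈ ℚ(a). Consequently x ∈ ℚ(a), so ℚ(a) = ℚ(s, x). -/
open IntermediateField

/-! Since `(s + 1)² = 6 + 2s`, we get `a^(2D) = (6 + 2s)^D = A + B s` with natural numbers
`A, B` and `B > 0`, so `s = (a^(2D) - A) / B ∈ ℚ(a)`; then `x = (s - 1) a / 4`. -/

lemma exists_six_add_two_mul_pow_eq {R : Type*} [CommRing R] {s : R} (hs : s ^ 2 = 5)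
    {n : ℕ} (hn : 0 < n) : ∃ A B : ℕ, 0 < B ∧ (6 + 2 * s) ^ n = A + B * s := by
  induction n, hn using Nat.le_induction with
  | base => exact ⟨6, 2, two_pos, by norm_num⟩
  | succ n _ ih =>
    obtain ⟨A, B, hB, hAB⟩ := ih
    refine ⟨6 * A + 10 * B, 2 * A + 6 * B, by omega, ?_⟩
    rw [pow_succ, hAB]
    push_cast
    linear_combination (2 * (B : R)) * hs

lemma mem_of_six_add_two_mul_pow_mem {L : Type*} [Field L] [CharZero L]
    {K : IntermediateField ℚ L} {s : L} (hs : s ^ 2 = 5) {n : ℕ} (hn : 0 < n)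
    (h : (6 + 2 * s) ^ n ∈ K) : s ∈ K := by
  obtain ⟨A, B, hB, hAB⟩ := exists_six_add_two_mul_pow_eq hs hn
  have hB' : (B : L) ≠ 0 := Nat.cast_ne_zero.mpr hB.ne'
  have hs_eq : s = ((6 + 2 * s) ^ n - A) / B := by
    rw [hAB]; field_simp; ring
  rw [hs_eq]
  exact div_mem (sub_mem h (IntermediateField.natCast_mem K A)) (IntermediateField.natCast_mem K B)

/-- If `s² = 5`, `x` is a root of unity of order dividing `2D`, and
`a = (s+1)x`, then `s ∈ ℚ(a)`, `x ∈ ℚ(a)`, and `ℚ(a) = ℚ(s, x)`. -/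
theorem stmt4 (s x : ℂ) (hs : s ^ 2 = 5) (D : ℕ) (hD : 0 < D)
    (hx : x ^ (2 * D) = 1) :
    s ∈ IntermediateField.adjoin ℚ {(s + 1) * x} ∧
    x ∈ IntermediateField.adjoin ℚ {(s + 1) * x} ∧
    IntermediateField.adjoin ℚ {(s + 1) * x}
      = IntermediateField.adjoin ℚ {s, x} := by
  set a := (s + 1) * x with ha
  have haK : a ∈ ℚ⟮a⟯ := mem_adjoin_simple_self ℚ a
  have ha_pow : a ^ (2 * D) = (6 + 2 * s) ^ D := by
    rw [ha, mul_pow, hx, mul_one, pow_mul]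
    congr 1
    linear_combination hs
  have hsK : s ∈ ℚ⟮a⟯ := mem_of_six_add_two_mul_pow_mem hs hD (ha_pow ▸ pow_mem haK _)
  -- `(s - 1)(s + 1) = 4`
  have hx_eq : x = (s * a - a) / 4 := by
    rw [ha]; linear_combination (-x / 4) * hs
  have hxK : x ∈ ℚ⟮a⟯ := by
    rw [hx_eq]
    exact div_mem (sub_mem (mul_mem hsK haK) haK) (ofNat_mem _ 4)
  refine ⟨hsK, hxK, le_antisymm ?_ ?_⟩
  · rw [adjoin_simple_le_iff]
    exact mul_mem (add_mem (subset_adjoin ℚ _ (Set.mem_insert s {x})) (one_mem _))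
      (subset_adjoin ℚ _ (Set.mem_insert_of_mem s rfl))
  · rw [adjoin_le_iff, Set.insert_subset_iff, Set.singleton_subset_iff]
    exact ⟨hsK, hxK⟩
end

section
/- Let d' be an odd positive integer. Then the degree [ℚ(ζ₄, ζ_{d'}, √2) : ℚ(ζ_{d'}, √−2)] = 2, where ζₙ denotes a primitive n-th root of unity and √−2 a square root of −2 in ℂ. -/
open IntermediateField Polynomial Module

/-!
`L = ℚ(ζ₄, ζ_{d'}, √2)` contains the primitive 8th root of unity `√2 (1 + ζ₄) / 2`, hence a
primitive `8d'`-th root of unity, so `[L : ℚ] ≥ φ(8d') = 4 φ(d')`. On the other hand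
`K = ℚ(ζ_{d'}, √-2)` has degree at most `2 φ(d')`, and `L ⊆ K(√2)` because `ζ₄ = ± √-2 √2 / 2`,
so `[L : K] ≤ 2`. The tower law forces `[L : K] = 2`.
-/

namespace IsPrimitiveRoot

theorem of_sq {M : Type*} [CommMonoid M] {w : M} {n : ℕ} (h : IsPrimitiveRoot (w ^ 2) n)
    (hn : Even n) : IsPrimitiveRoot w (2 * n) := by
  have hk := h.eq_orderOf
  rw [orderOf_pow' w two_ne_zero] at hk
  rcases Nat.even_or_odd (orderOf w) with he | ho
  · have h2 := even_iff_two_dvd.mp he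
    rw [hk, Nat.gcd_eq_right h2, Nat.mul_div_cancel' h2]
    exact IsPrimitiveRoot.orderOf w
  · rw [(Nat.coprime_two_right.mpr ho).gcd_eq_one, Nat.div_one] at hk
    exact absurd (hk ▸ hn) (Nat.not_even_iff_odd.mpr ho)

theorem sq_eq_neg_one {R : Type*} [CommRing R] [IsDomain R] {i : R} (h : IsPrimitiveRoot i 4) :
    i ^ 2 = -1 :=
  (h.pow_of_dvd two_ne_zero (by norm_num)).eq_neg_one_of_two_right

theorem finrank_adjoin_rat {F : Type*} [Field F] [CharZero F] {μ : F} {n : ℕ}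
    (h : IsPrimitiveRoot μ n) (hn : 0 < n) : finrank ℚ ℚ⟮μ⟯ = n.totient := by
  rw [adjoin.finrank (h.isIntegral hn).tower_top, ← cyclotomic_eq_minpoly_rat h hn,
    natDegree_cyclotomic]

theorem eight_of_sq_eq_two {F : Type*} [Field F] [NeZero (2 : F)] {i s : F}
    (hi : IsPrimitiveRoot i 4) (hs : s ^ 2 = 2) : IsPrimitiveRoot (s / 2 * (1 + i)) 8 := by
  have hsq : (s / 2 * (1 + i)) ^ 2 = i := by
    field_simp
    linear_combination (1 + i) ^ 2 * hs + 2 * hi.sq_eq_neg_one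
  simpa using of_sq (hsq ▸ hi) (by decide)

end IsPrimitiveRoot

theorem IntermediateField.finrank_adjoin_simple_le_two {K L : Type*} [Field K] [Field L]
    [Algebra K L] {x : L} {c : K} (hx : x ^ 2 = algebraMap K L c) : finrank K K⟮x⟯ ≤ 2 := by
  have hp : aeval x (X ^ 2 - C c) = 0 := by simp [hx]
  rw [adjoin.finrank ⟨_, monic_X_pow_sub_C c two_ne_zero, hp⟩]
  simpa using natDegree_le_natDegree
    (minpoly.degree_le_of_ne_zero K x (X_pow_sub_C_ne_zero two_pos c) hp)

theorem IntermediateField.finrank_adjoin_pair_le_of_sq {K L : Type*} [Field K] [Field L]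
    [Algebra K L] (x : L) {y : L} {c : K} (hy : y ^ 2 = algebraMap K L c) :
    finrank K K⟮x, y⟯ ≤ finrank K K⟮x⟯ * 2 := by
  rw [← adjoin_simple_adjoin_simple]
  change finrank K K⟮x⟯⟮y⟯ ≤ _
  rw [← finrank_mul_finrank K K⟮x⟯ K⟮x⟯⟮y⟯]
  gcongr
  exact finrank_adjoin_simple_le_two (c := algebraMap K K⟮x⟯ c) hy

theorem four_mul_totient_le_finrank_adjoin {F : Type*} [Field F] [CharZero F] {d : ℕ}
    (hd : Odd d) {i z s : F} (hi : IsPrimitiveRoot i 4) (hz : IsPrimitiveRoot z d)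
    (hs : s ^ 2 = 2) : 4 * d.totient ≤ finrank ℚ ℚ⟮i, z, s⟯ := by
  have hcop : Nat.Coprime 8 d := Nat.Coprime.pow_left 3 (Nat.coprime_two_left.mpr hd)
  have h8 := hi.eight_of_sq_eq_two hs
  have hζ := h8.pow_mul_pow_lcm hz (by norm_num) hd.pos.ne'
  rw [hcop.lcm_eq_mul] at hζ
  have : FiniteDimensional ℚ ℚ⟮i, z, s⟯ := by
    refine finiteDimensional_adjoin ?_
    rintro x (rfl | rfl | rfl)
    · exact (hi.isIntegral (by norm_num)).tower_top
    · exact (hz.isIntegral hd.pos).tower_top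
    · refine IsIntegral.of_pow two_pos ?_
      rw [hs, ← map_ofNat (algebraMap ℚ F) 2]
      exact isIntegral_algebraMap
  have hmem : s / 2 * (1 + i) ∈ ℚ⟮i, z, s⟯ := by
    have hi' : i ∈ ℚ⟮i, z, s⟯ := subset_adjoin _ _ (by simp)
    have hs' : s ∈ ℚ⟮i, z, s⟯ := subset_adjoin _ _ (by simp)
    exact mul_mem (div_mem hs' (ofNat_mem _ 2)) (add_mem (one_mem _) hi')
  calc 4 * d.totient = (8 * d).totient := by rw [Nat.totient_mul hcop]; rfl
    _ = finrank ℚ ℚ⟮_⟯ := (hζ.finrank_adjoin_rat (Nat.mul_pos (by norm_num) hd.pos)).symm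
    _ ≤ finrank ℚ ℚ⟮i, z, s⟯ :=
      finrank_le_of_le_right (adjoin_simple_le_iff.mpr (mul_mem (pow_mem hmem _)
        (pow_mem (subset_adjoin _ _ (by simp)) _)))

theorem finrank_extendScalars_adjoin_le_two {K F : Type*} [Field K] [Field F] [Algebra K F]
    [NeZero (2 : F)] {i z s t : F} (hi : i ^ 2 = -1) (hs : s ^ 2 = 2) (ht : t ^ 2 = -2)
    (hle : K⟮z, t⟯ ≤ K⟮i, z, s⟯) : finrank K⟮z, t⟯ (extendScalars hle) ≤ 2 := by
  have hsK : s ^ 2 = algebraMap K⟮z, t⟯ F 2 := by rw [hs, map_ofNat]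
  have : FiniteDimensional K⟮z, t⟯ K⟮z, t⟯⟮s⟯ :=
    adjoin.finiteDimensional (IsIntegral.of_pow two_pos (hsK ▸ isIntegral_algebraMap))
  refine (finrank_le_of_le_right ?_).trans (finrank_adjoin_simple_le_two hsK)
  change K⟮i, z, s⟯ ≤ K⟮z, t⟯⟮s⟯.restrictScalars K
  have hK : ∀ x ∈ K⟮z, t⟯, x ∈ K⟮z, t⟯⟮s⟯ := fun x hx =>
    IntermediateField.algebraMap_mem _ (⟨x, hx⟩ : K⟮z, t⟯)
  have ht' : t ∈ K⟮z, t⟯⟮s⟯ := hK t (subset_adjoin _ _ (by simp))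
  have hs' : s ∈ K⟮z, t⟯⟮s⟯ := mem_adjoin_simple_self _ s
  -- `t * s` is a square root of `-4`, so `i = ± t * s / 2`.
  have hi' : i ∈ K⟮z, t⟯⟮s⟯ := by
    have hts : i ^ 2 = (t * s / 2) ^ 2 := by
      field_simp
      linear_combination 4 * hi - s ^ 2 * ht + 2 * hs
    have hmem : t * s / 2 ∈ K⟮z, t⟯⟮s⟯ := div_mem (mul_mem ht' hs') (ofNat_mem _ 2)
    rcases sq_eq_sq_iff_eq_or_eq_neg.mp hts with h | h <;> rw [h]
    exacts [hmem, neg_mem hmem]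
  rw [adjoin_le_iff]
  rintro x (rfl | rfl | rfl)
  exacts [hi', hK _ (subset_adjoin _ _ (by simp)), hs']

theorem stmt15_general (d' : ℕ) (hodd : Odd d') (ζ₄ ζd' t : ℂ)
    (h₄ : IsPrimitiveRoot ζ₄ 4) (hd' : IsPrimitiveRoot ζd' d')
    (ht : t ^ 2 = -2)
    (hle : IntermediateField.adjoin ℚ {ζd', t}
      ≤ IntermediateField.adjoin ℚ {ζ₄, ζd', (Real.sqrt 2 : ℂ)}) :
    Module.finrank (IntermediateField.adjoin ℚ {ζd', t})
      (IntermediateField.extendScalars hle) = 2 := by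
  have hs : ((√2 : ℝ) : ℂ) ^ 2 = 2 := by norm_cast; simp
  have hL := four_mul_totient_le_finrank_adjoin hodd h₄ hd' hs
  have hK : finrank ℚ ℚ⟮ζd', t⟯ ≤ d'.totient * 2 := by
    rw [← hd'.finrank_adjoin_rat hodd.pos]
    exact finrank_adjoin_pair_le_of_sq ζd' (c := -2) (by rw [ht, map_neg, map_ofNat])
  have hE := finrank_extendScalars_adjoin_le_two h₄.sq_eq_neg_one hs ht hle
  have htower := finrank_mul_finrank ℚ ℚ⟮ζd', t⟯ (extendScalars hle)
  have htot := Nat.totient_pos.mpr hodd.pos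
  change _ = finrank ℚ ℚ⟮ζ₄, ζd', (√2 : ℂ)⟯ at htower
  interval_cases finrank ℚ⟮ζd', t⟯ (extendScalars hle) <;> nlinarith

/-- For odd `d' > 0`, the degree `[ℚ(ζ₄, ζ_{d'}, √2) : ℚ(ζ_{d'}, √-2)] = 2`. -/
theorem stmt15 (d' : ℕ) (hpos : 0 < d') (hodd : Odd d') (ζ₄ ζd' t : ℂ)
    (h₄ : IsPrimitiveRoot ζ₄ 4) (hd' : IsPrimitiveRoot ζd' d')
    (ht : t ^ 2 = -2)
    (hle : IntermediateField.adjoin ℚ {ζd', t}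
      ≤ IntermediateField.adjoin ℚ {ζ₄, ζd', (Real.sqrt 2 : ℂ)}) :
    Module.finrank (IntermediateField.adjoin ℚ {ζd', t})
      (IntermediateField.extendScalars hle) = 2 :=
  stmt15_general d' hodd ζ₄ ζd' t h₄ hd' ht hle
end

section
/- Let t ∈ ℂ and let w be a root of unity with t² = 2w. Then ℚ(t) = ℚ(√(2w)) and moreover w ∈ ℚ(t) if and only if √2 · (a square root of w) ∈ ℚ(t); in particular, if w has order 2^k with k ≥ 3, then ℚ(t) = ℚ(ζ_{2^{k+1}}). -/
open IntermediateField

private lemma sqrt2_sq : ((Real.sqrt 2 : ℝ) : ℂ) ^ 2 = 2 := by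
  norm_cast
  rw [Real.sq_sqrt] ; norm_num

private lemma adjoin_neg_eq (b : ℂ) :
    IntermediateField.adjoin ℚ {-b} = IntermediateField.adjoin ℚ {b} := by
  apply le_antisymm <;> rw [IntermediateField.adjoin_le_iff, Set.singleton_subset_iff]
  · exact neg_mem (mem_adjoin_simple_self ℚ b)
  · simpa using neg_mem (mem_adjoin_simple_self ℚ (-b))

private lemma sqrt2_mem_of_sq {F : IntermediateField ℚ ℂ} {x : ℂ} (hx : x ∈ F)
    (h : x ^ 2 = 2) : ((Real.sqrt 2 : ℝ) : ℂ) ∈ F := by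
  have h2 := sqrt2_sq
  have key : (((Real.sqrt 2 : ℝ) : ℂ) - x) * (((Real.sqrt 2 : ℝ) : ℂ) + x) = 0 := by
    have : (((Real.sqrt 2 : ℝ) : ℂ) - x) * (((Real.sqrt 2 : ℝ) : ℂ) + x)
        = ((Real.sqrt 2 : ℝ) : ℂ) ^ 2 - x ^ 2 := by ring
    rw [this, h2, h, sub_self]
  rcases mul_eq_zero.1 key with h' | h'
  · rw [sub_eq_zero.1 h']; exact hx
  · rw [eq_neg_of_add_eq_zero_left h']
    exact neg_mem hx

private lemma sqrt2_mem_of_pow4 {F : IntermediateField ℚ ℂ} {η : ℂ} (hη : η ∈ F)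
    (h4 : η ^ 4 = -1) : ((Real.sqrt 2 : ℝ) : ℂ) ∈ F := by
  have hne : η ≠ 0 := by rintro rfl; norm_num at h4
  refine sqrt2_mem_of_sq (add_mem hη (inv_mem hη)) ?_
  field_simp
  linear_combination h4

private lemma pow_half_eq_neg_one {w : ℂ} {k : ℕ} (hw : IsPrimitiveRoot w (2 ^ (k + 1))) :
    w ^ (2 ^ k) = -1 := by
  have h1 : (w ^ 2 ^ k) ^ 2 = 1 := by
    rw [← pow_mul, ← pow_succ, hw.pow_eq_one]
  rcases sq_eq_one_iff.1 h1 with h | h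
  · exact absurd h (hw.pow_ne_one_of_pos_of_lt (by positivity)
      (Nat.pow_lt_pow_right one_lt_two (lt_add_one k)))
  · exact h

private lemma prim_sqrt {s w : ℂ} {k : ℕ} (hs : s ^ 2 = w)
    (hw : IsPrimitiveRoot w (2 ^ (k + 1))) : IsPrimitiveRoot s (2 ^ (k + 2)) := by
  have key : ∀ m : ℕ, s ^ (2 * m) = w ^ m := fun m => by
    rw [← hs, ← pow_mul]
  constructor
  · rw [show (2 : ℕ) ^ (k + 2) = 2 * 2 ^ (k + 1) by ring, key, hw.pow_eq_one]
  · intro l hl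
    have hwl : w ^ l = 1 := by
      rw [← hs, ← pow_mul, mul_comm, pow_mul, hl, one_pow]
    obtain ⟨m, rfl⟩ := hw.dvd_of_pow_eq_one l hwl
    have hneg : s ^ (2 ^ (k + 1)) = -1 := by
      rw [show (2 : ℕ) ^ (k + 1) = 2 * 2 ^ k by ring, key]
      exact pow_half_eq_neg_one hw
    have : ((-1 : ℂ)) ^ m = 1 := by
      rw [← hneg, ← pow_mul]; exact hl
    have hm : Even m := by
      rcases Nat.even_or_odd m with h | h
      · exact h
      · rw [h.neg_one_pow] at this; norm_num at this
    obtain ⟨c, rfl⟩ := hm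
    exact ⟨c, by ring⟩

/-- Let `t² = 2w` with `w` a root of unity. Then `ℚ(t) = ℚ(u)` for any square
root `u` of `2w`; `w ∈ ℚ(t)` iff `√2·s ∈ ℚ(t)` for some square root `s` of
`w`; and if `w` has order `2^k` with `k ≥ 3` then `ℚ(t) = ℚ(ζ_{2^(k+1)})`. -/
theorem stmt18 (t w : ℂ) (n : ℕ) (hn : 0 < n) (hw : w ^ n = 1)
    (ht : t ^ 2 = 2 * w) :
    (∀ u : ℂ, u ^ 2 = 2 * w →
      IntermediateField.adjoin ℚ {t} = IntermediateField.adjoin ℚ {u}) ∧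
    ((w ∈ IntermediateField.adjoin ℚ {t}) ↔
      ∃ s : ℂ, s ^ 2 = w ∧
        (Real.sqrt 2 : ℂ) * s ∈ IntermediateField.adjoin ℚ {t}) ∧
    ∀ k : ℕ, 3 ≤ k → IsPrimitiveRoot w (2 ^ k) →
      ∀ ζ : ℂ, IsPrimitiveRoot ζ (2 ^ (k + 1)) →
        IntermediateField.adjoin ℚ {t} = IntermediateField.adjoin ℚ {ζ} := by
  have hsr : ((Real.sqrt 2 : ℝ) : ℂ) ≠ 0 := Complex.ofReal_ne_zero.2 (by positivity)
  have h2F : (2 : ℂ) ∈ IntermediateField.adjoin ℚ {t} := by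
    simpa using IntermediateField.algebraMap_mem (IntermediateField.adjoin ℚ {t}) (2 : ℚ)
  have hwF : w ∈ IntermediateField.adjoin ℚ {t} := by
    have : w = t ^ 2 / 2 := by rw [ht, mul_div_cancel_left₀ _ (two_ne_zero)]
    rw [this]
    exact div_mem (pow_mem (mem_adjoin_simple_self ℚ t) 2) h2F
  refine ⟨?_, ?_, ?_⟩
  · intro u hu
    have : u ^ 2 = t ^ 2 := by rw [hu, ht]
    rcases sq_eq_sq_iff_eq_or_eq_neg.1 this with rfl | rfl
    · rfl
    · exact (adjoin_neg_eq t).symm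
  · constructor
    · intro _
      refine ⟨t / ((Real.sqrt 2 : ℝ) : ℂ), ?_, ?_⟩
      · rw [div_pow, sqrt2_sq, ht, mul_div_cancel_left₀ _ (two_ne_zero)]
      · rw [mul_comm, div_mul_cancel₀ t hsr]
        exact mem_adjoin_simple_self ℚ t
    · intro _
      exact hwF
  · intro k hk hwp ζ hζ
    obtain ⟨j, rfl⟩ : ∃ j, k = j + 3 := ⟨k - 3, by omega⟩
    set F := IntermediateField.adjoin ℚ {t} with hF
    set s : ℂ := t / ((Real.sqrt 2 : ℝ) : ℂ) with hs_def
    have hs2 : s ^ 2 = w := by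
      rw [hs_def, div_pow, sqrt2_sq, ht, mul_div_cancel_left₀ _ (two_ne_zero)]
    have hts : t = ((Real.sqrt 2 : ℝ) : ℂ) * s := by
      rw [hs_def, mul_comm, div_mul_cancel₀ t hsr]
    -- √2 ∈ F
    have hη4 : (w ^ (2 ^ j)) ^ 4 = -1 := by
      rw [← pow_mul, show 2 ^ j * 4 = 2 ^ (j + 2) by ring]
      exact pow_half_eq_neg_one (k := j + 2) hwp
    have hsqrt2F : ((Real.sqrt 2 : ℝ) : ℂ) ∈ F := sqrt2_mem_of_pow4 (pow_mem hwF _) hη4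
    have hsF : s ∈ F := div_mem (mem_adjoin_simple_self ℚ t) hsqrt2F
    -- s is a primitive 2^(j+4)-th root of unity
    have hs_prim : IsPrimitiveRoot s (2 ^ (j + 4)) := prim_sqrt (k := j + 2) hs2 hwp
    have hNZ : NeZero ((2 : ℕ) ^ (j + 4)) := ⟨by positivity⟩
    obtain ⟨a, _, ha⟩ := hs_prim.eq_pow_of_pow_eq_one hζ.pow_eq_one
    obtain ⟨b, _, hb⟩ := hζ.eq_pow_of_pow_eq_one hs_prim.pow_eq_one
    -- √2 ∈ ℚ(ζ)
    have hη'4 : (ζ ^ (2 ^ (j + 1))) ^ 4 = -1 := by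
      rw [← pow_mul, show 2 ^ (j + 1) * 4 = 2 ^ (j + 3) by ring]
      exact pow_half_eq_neg_one (k := j + 3) hζ
    have hsqrt2G : ((Real.sqrt 2 : ℝ) : ℂ) ∈ IntermediateField.adjoin ℚ {ζ} :=
      sqrt2_mem_of_pow4 (pow_mem (mem_adjoin_simple_self ℚ ζ) _) hη'4
    apply le_antisymm
    · rw [hF, IntermediateField.adjoin_le_iff, Set.singleton_subset_iff]
      have : t = ((Real.sqrt 2 : ℝ) : ℂ) * ζ ^ b := by rw [hb, ← hts]
      rw [this]
      exact mul_mem hsqrt2G (pow_mem (mem_adjoin_simple_self ℚ ζ) b)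
    · rw [IntermediateField.adjoin_le_iff, Set.singleton_subset_iff]
      rw [← ha]
      exact pow_mem hsF a
end
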